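/- Let n ∈ ℕ, let f : Bool^n → Bool, and let X ∈ IS_br be an instruction sequence that computes f. Then there exists an instruction sequence Y ∈ IS_br in which no primitive instruction contains the basic instruction out.set:false, such that Y computes f and psize(Y) ≤ 3·psize(X). -/

import Mathlib

/-- Boolean register names: `inp i` is input register `in:(i+1)`,
`aux i` is auxiliary register `aux:(i+1)`, `out` is the output register. -/
inductive Reg where
  | inp : ℕ → Reg
  | aux : ℕ → Reg
  | out : Reg
deriving DecidableEq

/-- Basic instructions: register reads/writes, and (for splitting instruction
sequences) `split p` and `reply p` for Boolean parameters `p`. -/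
inductive BInstr where
  | get : Reg → BInstr
  | set : Reg → Bool → BInstr
  | split : ℕ → BInstr
  | reply : ℕ → BInstr
deriving DecidableEq

/-- Primitive instructions. -/
inductive PInstr where
  | plain : BInstr → PInstr
  | pos : BInstr → PInstr
  | neg : BInstr → PInstr
  | jump : ℕ → PInstr
  | halt : PInstr
deriving DecidableEq

abbrev RegState := Reg → Bool

/-- State change caused by processing a basic instruction. -/
def BInstr.effect : BInstr → RegState → RegState
  | .set r b, s => Function.update s r b
  | _, s => s

/-- Reply produced by processing a basic instruction. -/
def BInstr.rpl : BInstr → RegState → Bool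
  | .get r, s => s r
  | .set _ b, _ => b
  | _, _ => false

def BInstr.isSplitReply : BInstr → Bool
  | .split _ => true
  | .reply _ => true
  | _ => false

/-- Single-thread execution of an instruction sequence on Boolean registers;
`none` means deadlock, `some s` means termination in register state `s`.
(`split`/`reply` instructions make no sense here and deadlock.) -/
def exec : List PInstr → RegState → Option RegState
  | [], _ => none
  | .plain a :: X, s =>
      if a.isSplitReply then none else exec X (a.effect s)
  | .pos a :: X, s =>
      if a.isSplitReply then none
      else if a.rpl s then exec X (a.effect s) else exec (X.drop 1) (a.effect s)
  | .neg a :: X, s =>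
      if a.isSplitReply then none
      else if a.rpl s then exec (X.drop 1) (a.effect s) else exec X (a.effect s)
  | .jump 0 :: _, _ => none
  | .jump (l+1) :: X, s => exec (X.drop l) s
  | .halt :: _, s => some s
termination_by X _ => X.length
decreasing_by all_goals (simp only [List.length_drop, List.length_cons]; omega)

/-- Initial register state: input registers `in:1 .. in:n` contain
`b 0, ..., b (n-1)`; all other registers contain `false`. -/
def initState (n : ℕ) (b : Fin n → Bool) : RegState := fun r =>
  match r with
  | .inp i => if h : i < n then b ⟨i, h⟩ else false
  | _ => false

/-- `X` computes the `n`-ary Boolean function `f`: for every input, execution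
terminates (does not deadlock) with the output register containing `f b`. -/
def Computes {n : ℕ} (f : (Fin n → Bool) → Bool) (X : List PInstr) : Prop :=
  ∀ b : Fin n → Bool, ∃ s : RegState,
    exec X (initState n b) = some s ∧ s Reg.out = f b

/-- Basic instructions allowed in `IS_br`. -/
def BrBasic : BInstr → Prop
  | .get (.inp _) => True
  | .get (.aux _) => True
  | .set (.aux _) _ => True
  | .set .out _ => True
  | _ => False

/-- Basic instructions allowed in `IS_br^na`. -/
def NaBasic : BInstr → Prop
  | .get (.inp _) => True
  | .set .out _ => True
  | _ => False

def InstrBasicOK (P : BInstr → Prop) : PInstr → Prop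
  | .plain a => P a
  | .pos a => P a
  | .neg a => P a
  | _ => True

/-- Membership of `IS_br` (non-empty, only allowed basic instructions). -/
def ISbr (X : List PInstr) : Prop :=
  X ≠ [] ∧ ∀ u ∈ X, InstrBasicOK BrBasic u

/-- Membership of `IS_br^na`. -/
def ISbrna (X : List PInstr) : Prop :=
  X ≠ [] ∧ ∀ u ∈ X, InstrBasicOK NaBasic u

/-- The primitive instruction contains the basic instruction `out.set:false`. -/
def UsesOutSetFalse : PInstr → Prop
  | .plain (.set .out false) => True
  | .pos (.set .out false) => True
  | .neg (.set .out false) => True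
  | _ => False

/-- The class PLIS of Boolean function families computable by
polynomial-length instruction sequences from `IS_br`. -/
def PLIS (F : (n : ℕ) → (Fin n → Bool) → Bool) : Prop :=
  ∃ h : Polynomial ℕ, ∀ n : ℕ, ∃ X : List PInstr,
    ISbr X ∧ Computes (F n) X ∧ X.length ≤ h.eval n

/-! Every instruction is expanded into a block of three, so that jumps only need to be scaled by
three. Inside a block, writes to `out` go to a fresh auxiliary register `aux m` instead, and `!`
becomes `+aux_m.get; out.set:true; !`. Since `out` starts out false and is no longer written
before termination, it ends up holding the value that `aux m` shadowed. -/

namespace BInstr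

def redirectOut (m : ℕ) : BInstr → BInstr
  | .set .out b => .set (.aux m) b
  | a => a

def auxBound : BInstr → ℕ
  | .get (.aux i) => i + 1
  | .set (.aux i) _ => i + 1
  | _ => 0

end BInstr

def PInstr.auxBound : PInstr → ℕ
  | .plain a | .pos a | .neg a => a.auxBound
  | _ => 0

def PInstr.expand (m : ℕ) : PInstr → List PInstr
  | .plain a => [.plain (a.redirectOut m), .jump 2, .jump 0]
  | .pos a => [.pos (a.redirectOut m), .jump 2, .jump 4]
  | .neg a => [.neg (a.redirectOut m), .jump 2, .jump 4]
  | .jump l => [.jump (3 * l), .jump 0, .jump 0]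
  | .halt => [.pos (.get (.aux m)), .plain (.set .out true), .halt]

def elimOutSetFalse (m : ℕ) (X : List PInstr) : List PInstr := X.flatMap (PInstr.expand m)

def shadowOut (m : ℕ) (s : RegState) : RegState :=
  Function.update (Function.update s (.aux m) (s .out)) .out false

@[simp] lemma PInstr.length_expand (m : ℕ) (u : PInstr) : (u.expand m).length = 3 := by
  cases u <;> rfl

lemma length_elimOutSetFalse (m : ℕ) (X : List PInstr) :
    (elimOutSetFalse m X).length = 3 * X.length := by
  simp [elimOutSetFalse, List.length_flatMap, mul_comm]

lemma List.drop_flatMap_of_length_eq {α β : Type*} {g : α → List β} {c : ℕ}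
    (hg : ∀ a, (g a).length = c) (X : List α) (k : ℕ) :
    (X.flatMap g).drop (c * k) = (X.drop k).flatMap g := by
  induction k generalizing X with
  | zero => simp
  | succ k ih =>
    cases X with
    | nil => simp
    | cons a X => simp [List.drop_append, hg, mul_add, ih]

lemma drop_elimOutSetFalse (m k : ℕ) (X : List PInstr) :
    (elimOutSetFalse m X).drop (3 * k) = elimOutSetFalse m (X.drop k) :=
  List.drop_flatMap_of_length_eq (PInstr.length_expand m) X k

namespace BInstr

variable {m : ℕ} {a : BInstr}

lemma isSplitReply_redirectOut : (a.redirectOut m).isSplitReply = a.isSplitReply := by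
  rcases a with _ | ⟨_ | _ | _, _⟩ | _ | _ <;> rfl

lemma rpl_redirectOut (hget : a ≠ .get .out) (hm : a.auxBound ≤ m) (s : RegState) :
    (a.redirectOut m).rpl (shadowOut m s) = a.rpl s := by
  rcases a with ⟨_ | i | _⟩ | ⟨_ | _ | _, _⟩ | _ | _ <;>
    simp_all [redirectOut, rpl, shadowOut, auxBound, Function.update_apply]
  omega

lemma effect_redirectOut (hm : a.auxBound ≤ m) (s : RegState) :
    (a.redirectOut m).effect (shadowOut m s) = shadowOut m (a.effect s) := by
  funext r
  rcases a with _ | ⟨_ | i | _, _⟩ | _ | _ <;> cases r <;>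
    simp_all [redirectOut, effect, shadowOut, auxBound, Function.update_apply]
  split_ifs <;> first | rfl | omega

end BInstr

lemma elimOutSetFalse_cons (m : ℕ) (u : PInstr) (X : List PInstr) :
    elimOutSetFalse m (u :: X) = u.expand m ++ elimOutSetFalse m X :=
  List.flatMap_cons

theorem exec_elimOutSetFalse {m : ℕ} :
    ∀ {X : List PInstr}, (∀ u ∈ X, InstrBasicOK (fun a => a ≠ .get .out ∧ a.auxBound ≤ m) u) →
    ∀ s : RegState, exec (elimOutSetFalse m X) (shadowOut m s) =
      (exec X s).map (fun t => Function.update t (.aux m) (t .out))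
  | [], _, s => by simp [elimOutSetFalse, exec]
  | .plain a :: X, hX, s | .pos a :: X, hX, s | .neg a :: X, hX, s => by
    obtain ⟨⟨hget, hm⟩, hX⟩ := List.forall_mem_cons.1 hX
    have ih := exec_elimOutSetFalse hX
    have ih_tail := exec_elimOutSetFalse fun u hu => hX u (List.mem_of_mem_tail hu)
    have drop_three : (elimOutSetFalse m X).drop 3 = elimOutSetFalse m X.tail := by
      simpa using drop_elimOutSetFalse m 1 X
    simp [elimOutSetFalse_cons, PInstr.expand, exec, BInstr.isSplitReply_redirectOut,
      BInstr.effect_redirectOut hm, BInstr.rpl_redirectOut hget hm, ih, ih_tail, drop_three]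
    split_ifs <;> rfl
  | .jump 0 :: X, _, s => by simp [elimOutSetFalse_cons, PInstr.expand, exec]
  | .jump (l + 1) :: X, hX, s => by
    have ih := exec_elimOutSetFalse fun u hu =>
      (List.forall_mem_cons.1 hX).2 u (List.mem_of_mem_drop (i := l) hu)
    rw [elimOutSetFalse_cons, PInstr.expand, show 3 * (l + 1) = 3 * l + 2 + 1 by ring]
    simp [exec, drop_elimOutSetFalse, ih]
  | .halt :: X, _, s => by
    cases h : s .out <;>
      simp [elimOutSetFalse_cons, PInstr.expand, exec, BInstr.rpl, BInstr.effect,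
        BInstr.isSplitReply, shadowOut, h]
termination_by X => X.length

lemma shadowOut_initState (m n : ℕ) (b : Fin n → Bool) :
    shadowOut m (initState n b) = initState n b := by
  funext r
  cases r <;> simp [shadowOut, initState, Function.update_apply]

lemma Computes.elimOutSetFalse {n m : ℕ} {f : (Fin n → Bool) → Bool} {X : List PInstr}
    (hX : ∀ u ∈ X, InstrBasicOK (fun a => a ≠ .get .out ∧ a.auxBound ≤ m) u)
    (hC : Computes f X) : Computes f (elimOutSetFalse m X) := by
  intro b
  obtain ⟨s, hs, hout⟩ := hC b
  refine ⟨Function.update s (.aux m) (s .out), ?_, by simpa using hout⟩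
  rw [← shadowOut_initState m, exec_elimOutSetFalse hX, hs, Option.map_some]

namespace PInstr

variable {m : ℕ}

lemma instrBasicOK_expand {u : PInstr} (hu : InstrBasicOK BrBasic u) :
    ∀ v ∈ u.expand m, InstrBasicOK BrBasic v := by
  cases u with
  | plain a | pos a | neg a =>
    rcases a with ⟨_ | _ | _⟩ | ⟨_ | _ | _, _⟩ | _ | _ <;>
      simp_all [expand, BInstr.redirectOut, InstrBasicOK, BrBasic]
  | jump | halt => simp [expand, InstrBasicOK, BrBasic]

lemma not_usesOutSetFalse_expand (u : PInstr) : ∀ v ∈ u.expand m, ¬ UsesOutSetFalse v := by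
  cases u with
  | plain a | pos a | neg a =>
    rcases a with ⟨_ | _ | _⟩ | ⟨_ | _ | _, _ | _⟩ | _ | _ <;>
      simp [expand, BInstr.redirectOut, UsesOutSetFalse]
  | jump | halt => simp [expand, UsesOutSetFalse]

end PInstr

lemma ISbr.elimOutSetFalse {X : List PInstr} (hX : ISbr X) (m : ℕ) :
    ISbr (elimOutSetFalse m X) := by
  obtain ⟨hne, hbr⟩ := hX
  refine ⟨?_, ?_⟩
  · rw [← List.length_pos_iff, length_elimOutSetFalse]
    exact Nat.mul_pos three_pos (List.length_pos_iff.2 hne)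
  · simp only [_root_.elimOutSetFalse, List.mem_flatMap]
    rintro v ⟨u, hu, hv⟩
    exact PInstr.instrBasicOK_expand (hbr u hu) v hv

lemma not_usesOutSetFalse_of_mem_elimOutSetFalse {m : ℕ} {X : List PInstr} :
    ∀ v ∈ elimOutSetFalse m X, ¬ UsesOutSetFalse v := by
  simp only [elimOutSetFalse, List.mem_flatMap]
  rintro v ⟨u, -, hv⟩
  exact u.not_usesOutSetFalse_expand v hv

lemma InstrBasicOK.redirectable {m : ℕ} {u : PInstr} (hu : InstrBasicOK BrBasic u)
    (hm : u.auxBound ≤ m) : InstrBasicOK (fun a => a ≠ .get .out ∧ a.auxBound ≤ m) u := by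
  rcases u with a | a | a | _ | _ <;> first | trivial | exact ⟨by rintro rfl; exact hu, hm⟩

/-- Theorem 4 of the paper: `out.set:false` can be eliminated at the cost of
at most a tripling of the length. -/
theorem statement4 (n : ℕ) (f : (Fin n → Bool) → Bool) (X : List PInstr)
    (hX : ISbr X) (hC : Computes f X) :
    ∃ Y : List PInstr, ISbr Y ∧ (∀ u ∈ Y, ¬ UsesOutSetFalse u) ∧
      Computes f Y ∧ Y.length ≤ 3 * X.length := by
  set m := (X.map PInstr.auxBound).sum
  have hredirectable : ∀ u ∈ X, InstrBasicOK (fun a => a ≠ .get .out ∧ a.auxBound ≤ m) u :=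
    fun u hu => (hX.2 u hu).redirectable (List.le_sum_of_mem (List.mem_map_of_mem hu))
  exact ⟨elimOutSetFalse m X, hX.elimOutSetFalse m, not_usesOutSetFalse_of_mem_elimOutSetFalse,
    hC.elimOutSetFalse hredirectable, (length_elimOutSetFalse m X).le⟩
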